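/- Monotonicity of strictly positive types: if spos(X, A) holds and S₁ ⊆ S₂ are semantic types (predicates on values with pointwise inclusion), then V⟦A⟧_{δ[X↦S₁]}^ρ ⊆ V⟦A⟧_{δ[X↦S₂]}^ρ, i.e. every value in the interpretation of A with X assigned S₁ is also in the interpretation with X assigned S₂. -/

import Mathlib

set_option maxHeartbeats 1000000

namespace FCRT

/-- Constants of the core calculus. -/
inductive Const : Type where
  | unit | tt | ff
  | int (z : Int)
deriving DecidableEq

/-- Binary operations. -/
inductive Op : Type where
  | eq | ne | lt | le | ge | gt
  | and | or
  | add | sub | mul | div | mod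
deriving DecidableEq

mutual
/-- Terms of the core calculus (de Bruijn indices for term variables). -/
inductive Tm : Type where
  | const (c : Const)
  | var (x : ℕ)
  | abs (A : Ty) (b : Tm)
  | app (f a : Tm)
  | tabs (L U : Ty) (b : Tm)
  | tapp (f : Tm) (A : Ty)
  | letin (A : Ty) (a b : Tm)
  | pair (a b : Tm)
  | matchPair (a b : Tm)           -- binds 2 term variables in b
  | matchSum (a bl br : Tm)        -- binds 1 term variable in each branch
  | inl (B : Ty) (a : Tm)
  | inr (A : Ty) (a : Tm)
  | binop (op : Op) (a b : Tm)
  | ite (a b1 b2 : Tm)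
  | loop (a b : Tm)                -- binds 1 term variable in b

/-- Types of the core calculus (de Bruijn indices for type variables). -/
inductive Ty : Type where
  | tvar (X : ℕ)
  | unit | tru | fls | int32
  | top | bot
  | pi (A B : Ty)                  -- Πx:A.B, binds 1 term variable in B
  | all (L U B : Ty)               -- ∀(X :> L <: U).B, binds 1 type variable in B
  | sigma (A B : Ty)               -- Σx:A.B, binds 1 term variable in B
  | sum (A B : Ty)
  | refine (A : Ty) (p : Tm)       -- {x : A | p}, binds 1 term variable in p
  | or (A B : Ty)
  | and (A B : Ty)
  | mu (A : Ty)                    -- μX.A, binds 1 type variable in A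
end

/-- Values: constants, pairs, injections, and closures capturing an environment. -/
inductive Value : Type where
  | const (c : Const)
  | pair (v1 v2 : Value)
  | inl (v : Value)
  | inr (v : Value)
  | clos (ρ : List Value) (b : Tm)    -- ⟨ρ, λx.b⟩
  | tclos (ρ : List Value) (b : Tm)   -- ⟨ρ, ΛX.b⟩

/-- Structural (first-order) equality on values; undefined on closures. -/
def valEq : Value → Value → Option Bool
  | .const c1, .const c2 => some (decide (c1 = c2))
  | .pair a1 a2, .pair b1 b2 => do
      let r1 ← valEq a1 b1
      let r2 ← valEq a2 b2
      pure (r1 && r2)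
  | .inl a, .inl b => valEq a b
  | .inr a, .inr b => valEq a b
  | .clos _ _, _ => none
  | _, .clos _ _ => none
  | .tclos _ _, _ => none
  | _, .tclos _ _ => none
  | _, _ => some false

def bval (b : Bool) : Value := .const (if b then .tt else .ff)

/-- The partial denotation δ(op, v₁, v₂) of binary operations. -/
def applyOp : Op → Value → Value → Option Value
  | .eq, v1, v2 => (valEq v1 v2).map bval
  | .ne, v1, v2 => (valEq v1 v2).map (fun b => bval (!b))
  | .lt, .const (.int a), .const (.int b) => some (bval (decide (a < b)))
  | .le, .const (.int a), .const (.int b) => some (bval (decide (a ≤ b)))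
  | .ge, .const (.int a), .const (.int b) => some (bval (decide (b ≤ a)))
  | .gt, .const (.int a), .const (.int b) => some (bval (decide (b < a)))
  | .and, .const .tt, .const .tt => some (bval true)
  | .and, .const .tt, .const .ff => some (bval false)
  | .and, .const .ff, .const .tt => some (bval false)
  | .and, .const .ff, .const .ff => some (bval false)
  | .or, .const .tt, .const .tt => some (bval true)
  | .or, .const .tt, .const .ff => some (bval true)
  | .or, .const .ff, .const .tt => some (bval true)
  | .or, .const .ff, .const .ff => some (bval false)
  | .add, .const (.int a), .const (.int b) => some (.const (.int (a + b)))
  | .sub, .const (.int a), .const (.int b) => some (.const (.int (a - b)))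
  | .mul, .const (.int a), .const (.int b) => some (.const (.int (a * b)))
  | .div, .const (.int a), .const (.int b) => some (.const (.int (a / b)))
  | .mod, .const (.int a), .const (.int b) => some (.const (.int (a % b)))
  | _, _, _ => none

mutual
/-- Fuel-bounded definitional interpreter.
`none` = fuel exhausted (timeout), `some none` = stuck, `some (some v)` = success. -/
def eval : ℕ → List Value → Tm → Option (Option Value)
  | 0, _, _ => none
  | n + 1, ρ, t =>
    match t with
    | .const c => some (some (.const c))
    | .var x => some ρ[x]?
    | .abs _ b => some (some (.clos ρ b))
    | .tabs _ _ b => some (some (.tclos ρ b))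
    | .app f a =>
      match eval n ρ f with
      | none => none
      | some none => some none
      | some (some (.clos ρf b)) =>
        match eval n ρ a with
        | none => none
        | some none => some none
        | some (some va) => eval n (va :: ρf) b
      | some (some _) => some none
    | .tapp f _ =>
      match eval n ρ f with
      | none => none
      | some none => some none
      | some (some (.tclos ρf b)) => eval n ρf b
      | some (some _) => some none
    | .letin _ a b =>
      match eval n ρ a with
      | none => none
      | some none => some none
      | some (some va) => eval n (va :: ρ) b
    | .pair a b =>
      match eval n ρ a with
      | none => none
      | some none => some none
      | some (some va) =>
        match eval n ρ b with
        | none => none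
        | some none => some none
        | some (some vb) => some (some (.pair va vb))
    | .matchPair a b =>
      match eval n ρ a with
      | none => none
      | some none => some none
      | some (some (.pair v1 v2)) => eval n (v2 :: v1 :: ρ) b
      | some (some _) => some none
    | .matchSum a bl br =>
      match eval n ρ a with
      | none => none
      | some none => some none
      | some (some (.inl v)) => eval n (v :: ρ) bl
      | some (some (.inr v)) => eval n (v :: ρ) br
      | some (some _) => some none
    | .inl _ a =>
      match eval n ρ a with
      | none => none
      | some none => some none
      | some (some v) => some (some (.inl v))
    | .inr _ a =>
      match eval n ρ a with
      | none => none
      | some none => some none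
      | some (some v) => some (some (.inr v))
    | .binop op a b =>
      match eval n ρ a with
      | none => none
      | some none => some none
      | some (some va) =>
        match eval n ρ b with
        | none => none
        | some none => some none
        | some (some vb) => some (applyOp op va vb)
    | .ite a b1 b2 =>
      match eval n ρ a with
      | none => none
      | some none => some none
      | some (some (.const .tt)) => eval n ρ b1
      | some (some (.const .ff)) => eval n ρ b2
      | some (some _) => some none
    | .loop a b =>
      match eval n ρ a with
      | none => none
      | some none => some none
      | some (some v0) => evalLoop n ρ b v0

/-- Iterating a loop body from a current state. -/
def evalLoop : ℕ → List Value → Tm → Value → Option (Option Value)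
  | 0, _, _, _ => none
  | n + 1, ρ, b, v0 =>
    match eval n (v0 :: ρ) b with
    | none => none
    | some none => some none
    | some (some (.inl v1)) => evalLoop n ρ b v1
    | some (some (.inr v)) => some (some v)
    | some (some _) => some none
end

/-- Terminated evaluation: ρ ⊢ a ⇓? r. -/
def Evals (ρ : List Value) (a : Tm) (r : Option Value) : Prop :=
  ∃ n, eval n ρ a = some r

/-- Successful evaluation: ρ ⊢ a ⇓ v. -/
def EvalsTo (ρ : List Value) (a : Tm) (v : Value) : Prop :=
  Evals ρ a (some v)

/-- Term interpretation relative to an arbitrary value predicate: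
whenever evaluation terminates, the result is a value satisfying `P`. -/
def ESem (P : Value → Prop) (ρ : List Value) (a : Tm) : Prop :=
  ∀ r, Evals ρ a r → ∃ v, r = some v ∧ P v

/-- Extending a type-variable assignment with a most-recent binding. -/
def extA (δ : ℕ → Value → Prop) (S : Value → Prop) : ℕ → Value → Prop
  | 0 => S
  | X + 1 => δ X

/-- Updating a type-variable assignment at index X. -/
def updA (δ : ℕ → Value → Prop) (X : ℕ) (S : Value → Prop) : ℕ → Value → Prop :=
  fun Y => if Y = X then S else δ Y

/-- The value interpretation V⟦A⟧_δ^ρ. -/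
def interp : Ty → (ℕ → Value → Prop) → List Value → Value → Prop
  | .tvar X, δ, _, v => δ X v
  | .unit, _, _, v => v = .const .unit
  | .tru, _, _, v => v = .const .tt
  | .fls, _, _, v => v = .const .ff
  | .int32, _, _, v => ∃ z : Int, v = .const (.int z)
  | .top, _, _, _ => True
  | .bot, _, _, _ => False
  | .pi A B, δ, ρ, v =>
      ∃ ρf b, v = .clos ρf b ∧
        ∀ va, interp A δ ρ va → ESem (fun w => interp B δ (va :: ρf) w) (va :: ρf) b
  | .all L U B, δ, ρ, v =>
      ∃ ρf b, v = .tclos ρf b ∧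
        ∀ S : Value → Prop,
          (∀ w, interp L δ ρ w → S w) → (∀ w, S w → interp U δ ρ w) →
          ESem (fun w => interp B (extA δ S) ρf w) ρf b
  | .sigma A B, δ, ρ, v =>
      ∃ v1 v2, v = .pair v1 v2 ∧ interp A δ ρ v1 ∧ interp B δ (v1 :: ρ) v2
  | .sum A B, δ, ρ, v =>
      (∃ w, v = .inl w ∧ interp A δ ρ w) ∨ (∃ w, v = .inr w ∧ interp B δ ρ w)
  | .refine A p, δ, ρ, v =>
      interp A δ ρ v ∧ ESem (fun w => w = Value.const .tt) (v :: ρ) p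
  | .or A B, δ, ρ, v => interp A δ ρ v ∨ interp B δ ρ v
  | .and A B, δ, ρ, v => interp A δ ρ v ∧ interp B δ ρ v
  | .mu A, δ, ρ, v =>
      ∀ n : ℕ,
        Nat.rec (motive := fun _ => Value → Prop)
          (fun _ => True)
          (fun _ Fn w => interp A (extA δ Fn) ρ w) n v
termination_by A _ _ _ => sizeOf A

/-- Term interpretation E⟦A⟧_δ^ρ(a). -/
def Esem (A : Ty) (δ : ℕ → Value → Prop) (ρ : List Value) (a : Tm) : Prop :=
  ESem (fun v => interp A δ ρ v) ρ a

mutual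
/-- Shift of term variables (cutoff d) in terms: a[↑]. -/
def shTmTm (d : ℕ) : Tm → Tm
  | .const c => .const c
  | .var x => .var (if x < d then x else x + 1)
  | .abs A b => .abs (shTmTy d A) (shTmTm (d + 1) b)
  | .app f a => .app (shTmTm d f) (shTmTm d a)
  | .tabs L U b => .tabs (shTmTy d L) (shTmTy d U) (shTmTm d b)
  | .tapp f A => .tapp (shTmTm d f) (shTmTy d A)
  | .letin A a b => .letin (shTmTy d A) (shTmTm d a) (shTmTm (d + 1) b)
  | .pair a b => .pair (shTmTm d a) (shTmTm d b)
  | .matchPair a b => .matchPair (shTmTm d a) (shTmTm (d + 2) b)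
  | .matchSum a bl br => .matchSum (shTmTm d a) (shTmTm (d + 1) bl) (shTmTm (d + 1) br)
  | .inl B a => .inl (shTmTy d B) (shTmTm d a)
  | .inr A a => .inr (shTmTy d A) (shTmTm d a)
  | .binop op a b => .binop op (shTmTm d a) (shTmTm d b)
  | .ite a b1 b2 => .ite (shTmTm d a) (shTmTm d b1) (shTmTm d b2)
  | .loop a b => .loop (shTmTm d a) (shTmTm (d + 1) b)

/-- Shift of term variables (cutoff d) in types: A[↑]. -/
def shTmTy (d : ℕ) : Ty → Ty
  | .tvar X => .tvar X
  | .unit => .unit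
  | .tru => .tru
  | .fls => .fls
  | .int32 => .int32
  | .top => .top
  | .bot => .bot
  | .pi A B => .pi (shTmTy d A) (shTmTy (d + 1) B)
  | .all L U B => .all (shTmTy d L) (shTmTy d U) (shTmTy d B)
  | .sigma A B => .sigma (shTmTy d A) (shTmTy (d + 1) B)
  | .sum A B => .sum (shTmTy d A) (shTmTy d B)
  | .refine A p => .refine (shTmTy d A) (shTmTm (d + 1) p)
  | .or A B => .or (shTmTy d A) (shTmTy d B)
  | .and A B => .and (shTmTy d A) (shTmTy d B)
  | .mu A => .mu (shTmTy d A)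
end

/-- Renaming of term variable d to i + d (decrementing variables above d):
used for the substitution a[0 ↦ i] of index i for index 0 (at cutoff d = 0). -/
def renVar (i d x : ℕ) : ℕ :=
  if x < d then x else if x = d then i + d else x - 1

mutual
/-- Substitution of the term variable i for the term variable 0 (at cutoff d) in terms. -/
def rnTm (i d : ℕ) : Tm → Tm
  | .const c => .const c
  | .var x => .var (renVar i d x)
  | .abs A b => .abs (rnTy i d A) (rnTm i (d + 1) b)
  | .app f a => .app (rnTm i d f) (rnTm i d a)
  | .tabs L U b => .tabs (rnTy i d L) (rnTy i d U) (rnTm i d b)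
  | .tapp f A => .tapp (rnTm i d f) (rnTy i d A)
  | .letin A a b => .letin (rnTy i d A) (rnTm i d a) (rnTm i (d + 1) b)
  | .pair a b => .pair (rnTm i d a) (rnTm i d b)
  | .matchPair a b => .matchPair (rnTm i d a) (rnTm i (d + 2) b)
  | .matchSum a bl br => .matchSum (rnTm i d a) (rnTm i (d + 1) bl) (rnTm i (d + 1) br)
  | .inl B a => .inl (rnTy i d B) (rnTm i d a)
  | .inr A a => .inr (rnTy i d A) (rnTm i d a)
  | .binop op a b => .binop op (rnTm i d a) (rnTm i d b)
  | .ite a b1 b2 => .ite (rnTm i d a) (rnTm i d b1) (rnTm i d b2)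
  | .loop a b => .loop (rnTm i d a) (rnTm i (d + 1) b)

/-- Substitution of the term variable i for the term variable 0 (at cutoff d) in types:
A[0 ↦ i] is `rnTy i 0 A`. -/
def rnTy (i d : ℕ) : Ty → Ty
  | .tvar X => .tvar X
  | .unit => .unit
  | .tru => .tru
  | .fls => .fls
  | .int32 => .int32
  | .top => .top
  | .bot => .bot
  | .pi A B => .pi (rnTy i d A) (rnTy i (d + 1) B)
  | .all L U B => .all (rnTy i d L) (rnTy i d U) (rnTy i d B)
  | .sigma A B => .sigma (rnTy i d A) (rnTy i (d + 1) B)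
  | .sum A B => .sum (rnTy i d A) (rnTy i d B)
  | .refine A p => .refine (rnTy i d A) (rnTm i (d + 1) p)
  | .or A B => .or (rnTy i d A) (rnTy i d B)
  | .and A B => .and (rnTy i d A) (rnTy i d B)
  | .mu A => .mu (rnTy i d A)
end

mutual
/-- Shift of type variables (cutoff d) in terms. -/
def shTyTm (d : ℕ) : Tm → Tm
  | .const c => .const c
  | .var x => .var x
  | .abs A b => .abs (shTyTy d A) (shTyTm d b)
  | .app f a => .app (shTyTm d f) (shTyTm d a)
  | .tabs L U b => .tabs (shTyTy d L) (shTyTy d U) (shTyTm (d + 1) b)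
  | .tapp f A => .tapp (shTyTm d f) (shTyTy d A)
  | .letin A a b => .letin (shTyTy d A) (shTyTm d a) (shTyTm d b)
  | .pair a b => .pair (shTyTm d a) (shTyTm d b)
  | .matchPair a b => .matchPair (shTyTm d a) (shTyTm d b)
  | .matchSum a bl br => .matchSum (shTyTm d a) (shTyTm d bl) (shTyTm d br)
  | .inl B a => .inl (shTyTy d B) (shTyTm d a)
  | .inr A a => .inr (shTyTy d A) (shTyTm d a)
  | .binop op a b => .binop op (shTyTm d a) (shTyTm d b)
  | .ite a b1 b2 => .ite (shTyTm d a) (shTyTm d b1) (shTyTm d b2)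
  | .loop a b => .loop (shTyTm d a) (shTyTm d b)

/-- Shift of type variables (cutoff d) in types: A[↑] on type variables. -/
def shTyTy (d : ℕ) : Ty → Ty
  | .tvar X => .tvar (if X < d then X else X + 1)
  | .unit => .unit
  | .tru => .tru
  | .fls => .fls
  | .int32 => .int32
  | .top => .top
  | .bot => .bot
  | .pi A B => .pi (shTyTy d A) (shTyTy d B)
  | .all L U B => .all (shTyTy d L) (shTyTy d U) (shTyTy (d + 1) B)
  | .sigma A B => .sigma (shTyTy d A) (shTyTy d B)
  | .sum A B => .sum (shTyTy d A) (shTyTy d B)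
  | .refine A p => .refine (shTyTy d A) (shTyTm d p)
  | .or A B => .or (shTyTy d A) (shTyTy d B)
  | .and A B => .and (shTyTy d A) (shTyTy d B)
  | .mu A => .mu (shTyTy (d + 1) A)
end

mutual
/-- Capture-avoiding substitution of a type for type variable dty in terms
(dtm counts the term binders crossed so far). -/
def tsubTm (A : Ty) : ℕ → ℕ → Tm → Tm
  | _, _, .const c => .const c
  | _, _, .var x => .var x
  | dty, dtm, .abs B b => .abs (tsubTy A dty dtm B) (tsubTm A dty (dtm + 1) b)
  | dty, dtm, .app f a => .app (tsubTm A dty dtm f) (tsubTm A dty dtm a)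
  | dty, dtm, .tabs L U b =>
      .tabs (tsubTy A dty dtm L) (tsubTy A dty dtm U) (tsubTm A (dty + 1) dtm b)
  | dty, dtm, .tapp f B => .tapp (tsubTm A dty dtm f) (tsubTy A dty dtm B)
  | dty, dtm, .letin B a b =>
      .letin (tsubTy A dty dtm B) (tsubTm A dty dtm a) (tsubTm A dty (dtm + 1) b)
  | dty, dtm, .pair a b => .pair (tsubTm A dty dtm a) (tsubTm A dty dtm b)
  | dty, dtm, .matchPair a b => .matchPair (tsubTm A dty dtm a) (tsubTm A dty (dtm + 2) b)
  | dty, dtm, .matchSum a bl br =>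
      .matchSum (tsubTm A dty dtm a) (tsubTm A dty (dtm + 1) bl) (tsubTm A dty (dtm + 1) br)
  | dty, dtm, .inl B a => .inl (tsubTy A dty dtm B) (tsubTm A dty dtm a)
  | dty, dtm, .inr B a => .inr (tsubTy A dty dtm B) (tsubTm A dty dtm a)
  | dty, dtm, .binop op a b => .binop op (tsubTm A dty dtm a) (tsubTm A dty dtm b)
  | dty, dtm, .ite a b1 b2 =>
      .ite (tsubTm A dty dtm a) (tsubTm A dty dtm b1) (tsubTm A dty dtm b2)
  | dty, dtm, .loop a b => .loop (tsubTm A dty dtm a) (tsubTm A dty (dtm + 1) b)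

/-- Capture-avoiding substitution of the type A for type variable dty in types. -/
def tsubTy (A : Ty) : ℕ → ℕ → Ty → Ty
  | dty, dtm, .tvar X =>
      if X < dty then .tvar X
      else if X = dty then (shTmTy 0)^[dtm] ((shTyTy 0)^[dty] A)
      else .tvar (X - 1)
  | _, _, .unit => .unit
  | _, _, .tru => .tru
  | _, _, .fls => .fls
  | _, _, .int32 => .int32
  | _, _, .top => .top
  | _, _, .bot => .bot
  | dty, dtm, .pi B C => .pi (tsubTy A dty dtm B) (tsubTy A dty (dtm + 1) C)
  | dty, dtm, .all L U B =>
      .all (tsubTy A dty dtm L) (tsubTy A dty dtm U) (tsubTy A (dty + 1) dtm B)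
  | dty, dtm, .sigma B C => .sigma (tsubTy A dty dtm B) (tsubTy A dty (dtm + 1) C)
  | dty, dtm, .sum B C => .sum (tsubTy A dty dtm B) (tsubTy A dty dtm C)
  | dty, dtm, .refine B p => .refine (tsubTy A dty dtm B) (tsubTm A dty (dtm + 1) p)
  | dty, dtm, .or B C => .or (tsubTy A dty dtm B) (tsubTy A dty dtm C)
  | dty, dtm, .and B C => .and (tsubTy A dty dtm B) (tsubTy A dty dtm C)
  | dty, dtm, .mu B => .mu (tsubTy A (dty + 1) dtm B)
end

/-- B[X ↦ A] for the outermost type variable X (de Bruijn index 0). -/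
def tySubst (A B : Ty) : Ty := tsubTy A 0 0 B

mutual
/-- Occurrence of term variable x in a term. -/
def fvTmTm (x : ℕ) : Tm → Bool
  | .const _ => false
  | .var y => y == x
  | .abs A b => fvTmTy x A || fvTmTm (x + 1) b
  | .app f a => fvTmTm x f || fvTmTm x a
  | .tabs L U b => fvTmTy x L || fvTmTy x U || fvTmTm x b
  | .tapp f A => fvTmTm x f || fvTmTy x A
  | .letin A a b => fvTmTy x A || fvTmTm x a || fvTmTm (x + 1) b
  | .pair a b => fvTmTm x a || fvTmTm x b
  | .matchPair a b => fvTmTm x a || fvTmTm (x + 2) b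
  | .matchSum a bl br => fvTmTm x a || fvTmTm (x + 1) bl || fvTmTm (x + 1) br
  | .inl B a => fvTmTy x B || fvTmTm x a
  | .inr A a => fvTmTy x A || fvTmTm x a
  | .binop _ a b => fvTmTm x a || fvTmTm x b
  | .ite a b1 b2 => fvTmTm x a || fvTmTm x b1 || fvTmTm x b2
  | .loop a b => fvTmTm x a || fvTmTm (x + 1) b

/-- Occurrence of term variable x in a type. -/
def fvTmTy (x : ℕ) : Ty → Bool
  | .tvar _ => false
  | .unit => false
  | .tru => false
  | .fls => false
  | .int32 => false
  | .top => false
  | .bot => false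
  | .pi A B => fvTmTy x A || fvTmTy (x + 1) B
  | .all L U B => fvTmTy x L || fvTmTy x U || fvTmTy x B
  | .sigma A B => fvTmTy x A || fvTmTy (x + 1) B
  | .sum A B => fvTmTy x A || fvTmTy x B
  | .refine A p => fvTmTy x A || fvTmTm (x + 1) p
  | .or A B => fvTmTy x A || fvTmTy x B
  | .and A B => fvTmTy x A || fvTmTy x B
  | .mu A => fvTmTy x A
end

mutual
/-- Occurrence of type variable X in a term. -/
def fvTyTm (X : ℕ) : Tm → Bool
  | .const _ => false
  | .var _ => false
  | .abs A b => fvTyTy X A || fvTyTm X b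
  | .app f a => fvTyTm X f || fvTyTm X a
  | .tabs L U b => fvTyTy X L || fvTyTy X U || fvTyTm (X + 1) b
  | .tapp f A => fvTyTm X f || fvTyTy X A
  | .letin A a b => fvTyTy X A || fvTyTm X a || fvTyTm X b
  | .pair a b => fvTyTm X a || fvTyTm X b
  | .matchPair a b => fvTyTm X a || fvTyTm X b
  | .matchSum a bl br => fvTyTm X a || fvTyTm X bl || fvTyTm X br
  | .inl B a => fvTyTy X B || fvTyTm X a
  | .inr A a => fvTyTy X A || fvTyTm X a
  | .binop _ a b => fvTyTm X a || fvTyTm X b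
  | .ite a b1 b2 => fvTyTm X a || fvTyTm X b1 || fvTyTm X b2
  | .loop a b => fvTyTm X a || fvTyTm X b

/-- Occurrence of type variable X in a type. -/
def fvTyTy (X : ℕ) : Ty → Bool
  | .tvar Y => Y == X
  | .unit => false
  | .tru => false
  | .fls => false
  | .int32 => false
  | .top => false
  | .bot => false
  | .pi A B => fvTyTy X A || fvTyTy X B
  | .all L U B => fvTyTy X L || fvTyTy X U || fvTyTy (X + 1) B
  | .sigma A B => fvTyTy X A || fvTyTy X B
  | .sum A B => fvTyTy X A || fvTyTy X B
  | .refine A p => fvTyTy X A || fvTyTm X p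
  | .or A B => fvTyTy X A || fvTyTy X B
  | .and A B => fvTyTy X A || fvTyTy X B
  | .mu A => fvTyTy (X + 1) A
end

/-- Strict positivity spos(X, A): X appears only in strictly positive positions of A. -/
def spos (X : ℕ) : Ty → Bool
  | .tvar _ => true
  | .unit => true
  | .tru => true
  | .fls => true
  | .int32 => true
  | .top => true
  | .bot => true
  | .pi A B => !fvTyTy X A && spos X B
  | .all L U B => !fvTyTy X L && !fvTyTy X U && spos (X + 1) B
  | .sigma A B => spos X A && spos X B
  | .sum A B => spos X A && spos X B
  | .refine A _ => spos X A
  | .or A B => !fvTyTy X A && !fvTyTy X B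
  | .and A B => spos X A && spos X B
  | .mu A => spos 0 A && !fvTyTy (X + 1) A

/-- Polarity-directed avoidance avoid(A, i)^±, removing term variable i from A.
`pol = true` is positive polarity (yielding a supertype),
`pol = false` is negative polarity (yielding a subtype). -/
def avoid (i : ℕ) (pol : Bool) : Ty → Ty
  | .tvar X => .tvar X
  | .unit => .unit
  | .tru => .tru
  | .fls => .fls
  | .int32 => .int32
  | .top => .top
  | .bot => .bot
  | .pi A B => .pi (avoid i (!pol) A) (avoid (i + 1) pol B)
  | .all L U B => .all (avoid i pol L) (avoid i (!pol) U) (avoid i pol B)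
  | .sigma A B => .sigma (avoid i pol A) (avoid (i + 1) pol B)
  | .sum A B => .sum (avoid i pol A) (avoid i pol B)
  | .refine A p =>
      .refine (avoid i pol A)
        (if fvTmTm (i + 1) p then (if pol then .const .tt else .const .ff) else p)
  | .or A B => .or (avoid i pol A) (avoid i pol B)
  | .and A B => .and (avoid i pol A) (avoid i pol B)
  | .mu A => if spos 0 A then .mu (avoid i pol A) else (if pol then .top else .bot)

/-- First-order types: those whose values support runtime equality. -/
def firstorder : Ty → Prop
  | .unit => True
  | .tru => True
  | .fls => True
  | .int32 => True
  | .refine A _ => firstorder A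
  | _ => False

/-- Context entries: term bindings x : A, type-variable bounds X :> L <: U,
and equality facts a₁ ∼ a₂. -/
inductive CtxEntry : Type where
  | tmBind (A : Ty)
  | tyBound (L U : Ty)
  | eqFact (a1 a2 : Tm)

/-- Typing contexts (head = most recent entry). -/
abbrev Ctx := List CtxEntry

/-- Context well-formedness wf(δ, Γ, ρ): ρ's values satisfy their declared type
interpretations, δ respects the declared bounds, and both sides of each equality
fact evaluate to a common value (each entry interpreted at its own depth). -/
def wf : (ℕ → Value → Prop) → Ctx → List Value → Prop
  | _, [], _ => True
  | δ, .tmBind A :: Γ, v :: ρ => interp A δ ρ v ∧ wf δ Γ ρ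
  | _, .tmBind _ :: _, [] => False
  | δ, .tyBound L U :: Γ, ρ =>
      (∀ v, interp L (fun X => δ (X + 1)) ρ v → δ 0 v) ∧
      (∀ v, δ 0 v → interp U (fun X => δ (X + 1)) ρ v) ∧
      wf (fun X => δ (X + 1)) Γ ρ
  | δ, .eqFact a1 a2 :: Γ, ρ =>
      (∃ v, EvalsTo ρ a1 v ∧ EvalsTo ρ a2 v) ∧ wf δ Γ ρ

/-- Semantic typing Γ ⊨ a : A. -/
def SemTyping (Γ : Ctx) (a : Tm) (A : Ty) : Prop :=
  ∀ δ ρ, wf δ Γ ρ → Esem A δ ρ a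

/-- Semantic subtyping Γ ⊨ A <: B. -/
def SemSub (Γ : Ctx) (A B : Ty) : Prop :=
  ∀ δ ρ, wf δ Γ ρ → ∀ v, interp A δ ρ v → interp B δ ρ v

/-- Semantic implication Γ ⊨ p₁ ⇒ p₂. -/
def SemImpl (Γ : Ctx) (p1 p2 : Tm) : Prop :=
  ∀ δ ρ, wf δ Γ ρ → Esem .tru δ ρ p1 → Esem .tru δ ρ p2

/-- Looking up the term variable x in Γ (types shifted to be read at the top of Γ). -/
inductive LookupVar : Ctx → ℕ → Ty → Prop where
  | here : LookupVar (.tmBind A :: Γ) 0 (shTmTy 0 A)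
  | thereTm : LookupVar Γ x A → LookupVar (.tmBind B :: Γ) (x + 1) (shTmTy 0 A)
  | thereTy : LookupVar Γ x A → LookupVar (.tyBound L U :: Γ) x (shTyTy 0 A)
  | thereEq : LookupVar Γ x A → LookupVar (.eqFact a1 a2 :: Γ) x A

/-- Looking up the bounds of type variable X in Γ (shifted to be read at the top of Γ). -/
inductive LookupTVar : Ctx → ℕ → Ty → Ty → Prop where
  | here : LookupTVar (.tyBound L U :: Γ) 0 (shTyTy 0 L) (shTyTy 0 U)
  | thereTy : LookupTVar Γ X L U →
      LookupTVar (.tyBound L' U' :: Γ) (X + 1) (shTyTy 0 L) (shTyTy 0 U)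
  | thereTm : LookupTVar Γ X L U →
      LookupTVar (.tmBind A :: Γ) X (shTmTy 0 L) (shTmTy 0 U)
  | thereEq : LookupTVar Γ X L U → LookupTVar (.eqFact a1 a2 :: Γ) X L U

/-- The boolean type Bool = True ∨ False. -/
def boolTy : Ty := .or .tru .fls

/-- compat(op, A): operand type compatibility for binary operations. -/
def opCompat : Op → Ty → Prop
  | .add, .int32 => True
  | .sub, .int32 => True
  | .mul, .int32 => True
  | .div, .int32 => True
  | .mod, .int32 => True
  | .lt, .int32 => True
  | .le, .int32 => True
  | .ge, .int32 => True
  | .gt, .int32 => True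
  | .and, A => A = boolTy
  | .or, A => A = boolTy
  | .eq, A => firstorder A
  | .ne, A => firstorder A
  | _, _ => False

/-- result(op, A): the result type of a binary operation. -/
def opResult (op : Op) (_ : Ty) : Ty :=
  match op with
  | .add | .sub | .mul | .div | .mod => .int32
  | _ => boolTy

/-- Syntactic subtyping Γ ⊢ A <: B. The premise of S-Refine uses the semantic
implication judgment. -/
inductive Sub : Ctx → Ty → Ty → Prop where
  | refl : Sub Γ A A
  | trans : Sub Γ A B → Sub Γ B C → Sub Γ A C
  | top : Sub Γ A .top
  | bot : Sub Γ .bot A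
  | fun_ : Sub Γ B1 A1 → Sub (.tmBind A1 :: Γ) A2 B2 →
      Sub Γ (.pi A1 A2) (.pi B1 B2)
  | forall_ : Sub Γ L1 L2 → Sub Γ U2 U1 → Sub (.tyBound L2 U2 :: Γ) A B →
      Sub Γ (.all L1 U1 A) (.all L2 U2 B)
  | sigma : Sub Γ A1 B1 → Sub (.tmBind A1 :: Γ) A2 B2 →
      Sub Γ (.sigma A1 A2) (.sigma B1 B2)
  | orL : Sub Γ A (.or A B)
  | orR : Sub Γ B (.or A B)
  | or : Sub Γ A C → Sub Γ B C → Sub Γ (.or A B) C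
  | andL : Sub Γ (.and A B) A
  | andR : Sub Γ (.and A B) B
  | and : Sub Γ C A → Sub Γ C B → Sub Γ C (.and A B)
  | refineBase : Sub Γ (.refine A p) A
  | refine : Sub Γ A B → SemImpl (.tmBind A :: Γ) p1 p2 →
      Sub Γ (.refine A p1) (.refine B p2)
  | tvarUpper : LookupTVar Γ X L U → Sub Γ (.tvar X) U
  | tvarLower : LookupTVar Γ X L U → Sub Γ L (.tvar X)
  | muUnfold : spos 0 A → Sub Γ (.mu A) (tySubst (.mu A) A)
  | muFold : spos 0 A → Sub Γ (tySubst (.mu A) A) (.mu A)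

/-- Syntactic typing Γ ⊢ a : A. -/
inductive Typing : Ctx → Tm → Ty → Prop where
  | unit : Typing Γ (.const .unit) .unit
  | tru : Typing Γ (.const .tt) .tru
  | fls : Typing Γ (.const .ff) .fls
  | int : Typing Γ (.const (.int z)) .int32
  | var : LookupVar Γ x A → Typing Γ (.var x) A
  | abs : Typing (.tmBind A :: Γ) b B → Typing Γ (.abs A b) (.pi A B)
  | app : Typing Γ f (.pi A B) → Typing Γ (.var y) A →
      Typing Γ (.app f (.var y)) (rnTy y 0 B)
  | tabs : Typing (.tyBound L U :: Γ) b B → Typing Γ (.tabs L U b) (.all L U B)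
  | tapp : Typing Γ f (.all L U B) → Sub Γ L A → Sub Γ A U →
      Typing Γ (.tapp f A) (tySubst A B)
  | letin : Typing Γ a A →
      Typing (.eqFact (.var 0) (shTmTm 0 a) :: .tmBind A :: Γ) b B →
      Typing Γ (.letin A a b) (avoid 0 true B)
  | pair : Typing Γ (.var y) A → Typing Γ a2 (rnTy y 0 B) →
      Typing Γ (.pair (.var y) a2) (.sigma A B)
  | binop : Typing Γ a A → Typing Γ b A → opCompat op A →
      Typing Γ (.binop op a b) (opResult op A)
  | ite : Typing Γ a boolTy →
      Typing (.eqFact a (.const .tt) :: Γ) b1 B1 →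
      Typing (.eqFact a (.const .ff) :: Γ) b2 B2 →
      Typing Γ (.ite a b1 b2) (.or B1 B2)
  | inl : Typing Γ a A → Typing Γ (.inl B a) (.sum A B)
  | inr : Typing Γ a B → Typing Γ (.inr A a) (.sum A B)
  | loop : Typing Γ a A →
      Typing (.tmBind A :: Γ) b (.sum (shTmTy 0 A) (shTmTy 0 B)) →
      Typing Γ (.loop a b) B
  | self : Typing Γ a A → firstorder A →
      Typing Γ a (.refine A (.binop .eq (.var 0) (shTmTm 0 a)))
  | sub : Typing Γ a A → Sub Γ A B → Typing Γ a B
  | matchPair : Typing Γ a (.sigma A B) →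
      Typing (.tmBind B :: .tmBind A :: Γ) b C →
      Typing Γ (.matchPair a b) (avoid 0 true (avoid 0 true C))
  | matchSum : Typing Γ a (.sum A1 A2) →
      Typing (.eqFact (shTmTm 0 a) (.inl (shTmTy 0 A2) (.var 0)) :: .tmBind A1 :: Γ) b1 B1 →
      Typing (.eqFact (shTmTm 0 a) (.inr (shTmTy 0 A1) (.var 0)) :: .tmBind A2 :: Γ) b2 B2 →
      Typing Γ (.matchSum a b1 b2) (.or (avoid 0 true B1) (avoid 0 true B2))

mutual
/-- Compatibility of values across insertion of the value w into an environment: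
first-order values are related to themselves, closures to closures with
correspondingly extended environment and shifted body. -/
inductive ValCompat (w : Value) : Value → Value → Prop where
  | const (c : Const) : ValCompat w (.const c) (.const c)
  | pair : ValCompat w v1 v1' → ValCompat w v2 v2' →
      ValCompat w (.pair v1 v2) (.pair v1' v2')
  | inl : ValCompat w v v' → ValCompat w (.inl v) (.inl v')
  | inr : ValCompat w v v' → ValCompat w (.inr v) (.inr v')
  | clos : EnvCompat w k ρ ρ' → ValCompat w (.clos ρ b) (.clos ρ' (shTmTm k b))
  | tclos : EnvCompat w k ρ ρ' → ValCompat w (.tclos ρ b) (.tclos ρ' (shTmTm k b))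

/-- Environment compatibility: ρ' is ρ with w inserted at depth k, with the
values above the insertion point pairwise compatible. -/
inductive EnvCompat (w : Value) : ℕ → List Value → List Value → Prop where
  | here (ρ : List Value) : EnvCompat w 0 ρ (w :: ρ)
  | cons : ValCompat w u u' → EnvCompat w k ρ ρ' →
      EnvCompat w (k + 1) (u :: ρ) (u' :: ρ')
end

/-- Compatibility of terminated results r ≈ r': stuck to stuck, values to
compatible values. -/
def ResCompat (w : Value) (r r' : Option Value) : Prop :=
  (r = none ∧ r' = none) ∨ ∃ v v', r = some v ∧ r' = some v' ∧ ValCompat w v v'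


/-! Strict positivity confines `X` to positions where enlarging its interpretation can only
enlarge that of `A`; in the remaining positions (function domains, quantifier bounds, the
operands of `∨` and the body of `μ`) `X` does not occur at all, and there the interpretation
does not depend on the value assigned to `X`. -/

theorem ESem.mono {P Q : Value → Prop} (h : ∀ v, P v → Q v) {ρ : List Value} {a : Tm}
    (ha : ESem P ρ a) : ESem Q ρ a := by
  intro r hr
  obtain ⟨v, rfl, hv⟩ := ha r hr
  exact ⟨v, rfl, h v hv⟩

theorem extA_updA (δ : ℕ → Value → Prop) (X : ℕ) (T S : Value → Prop) :
    extA (updA δ X T) S = updA (extA δ S) (X + 1) T := by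
  funext Y
  cases Y <;> simp [extA, updA]

theorem extA_congr {δ₁ δ₂ : ℕ → Value → Prop} {p : ℕ → Prop} (S : Value → Prop)
    (h : ∀ Y, p (Y + 1) → δ₁ Y = δ₂ Y) : ∀ Y, p Y → extA δ₁ S Y = extA δ₂ S Y
  | 0, _ => rfl
  | Y + 1, hY => h Y hY

theorem interp_congr (A : Ty) {δ₁ δ₂ : ℕ → Value → Prop}
    (h : ∀ Y, fvTyTy Y A → δ₁ Y = δ₂ Y) : interp A δ₁ = interp A δ₂ := by
  match A with
  | .tvar X => funext ρ v; simp only [interp, h X (by simp [fvTyTy])]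
  | .unit | .tru | .fls | .int32 | .top | .bot => funext ρ v; simp only [interp]
  | .pi A B | .sigma A B | .sum A B | .or A B | .and A B =>
    have hA := interp_congr A fun Y hY => h Y (by simp [fvTyTy, hY])
    have hB := interp_congr B fun Y hY => h Y (by simp [fvTyTy, hY])
    funext ρ v; simp only [interp, hA, hB]
  | .all L U B =>
    have hL := interp_congr L fun Y hY => h Y (by simp [fvTyTy, hY])
    have hU := interp_congr U fun Y hY => h Y (by simp [fvTyTy, hY])
    have hB := fun S => interp_congr B (extA_congr S fun Y hY => h Y (by simp [fvTyTy, hY]))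
    funext ρ v; simp only [interp, hL, hU, hB]
  | .refine A p =>
    have hA := interp_congr A fun Y hY => h Y (by simp [fvTyTy, hY])
    funext ρ v; simp only [interp, hA]
  | .mu A =>
    have hA := fun S => interp_congr A (extA_congr S fun Y hY => h Y (by simp [fvTyTy, hY]))
    funext ρ v; simp only [interp, hA]
termination_by sizeOf A

theorem interp_updA_of_fvTyTy_eq_false {A : Ty} {X : ℕ} (hX : fvTyTy X A = false)
    (δ : ℕ → Value → Prop) (S₁ S₂ : Value → Prop) :
    interp A (updA δ X S₁) = interp A (updA δ X S₂) :=
  interp_congr A fun Y hY => by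
    have : Y ≠ X := by rintro rfl; simp [hY] at hX
    simp [updA, this]

theorem interp_updA_mono_of_spos (A : Ty) {X : ℕ} (hX : spos X A) (δ : ℕ → Value → Prop)
    {S₁ S₂ : Value → Prop} (hS : ∀ v, S₁ v → S₂ v) (ρ : List Value) (v : Value)
    (hv : interp A (updA δ X S₁) ρ v) : interp A (updA δ X S₂) ρ v := by
  match A with
  | .tvar Y =>
    simp only [interp, updA] at hv ⊢
    split_ifs at hv ⊢
    exacts [hS v hv, hv]
  | .unit | .tru | .fls | .int32 | .top | .bot => simp only [interp] at hv ⊢ <;> exact hv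
  | .pi A B =>
    simp only [spos, Bool.and_eq_true, Bool.not_eq_eq_eq_not, Bool.not_true] at hX
    simp only [interp] at hv ⊢
    obtain ⟨ρf, b, rfl, hf⟩ := hv
    refine ⟨ρf, b, rfl, fun va hva => ?_⟩
    rw [interp_updA_of_fvTyTy_eq_false hX.1 δ S₂ S₁] at hva
    exact (hf va hva).mono fun w => interp_updA_mono_of_spos B hX.2 δ hS _ w
  | .all L U B =>
    simp only [spos, Bool.and_eq_true, Bool.not_eq_eq_eq_not, Bool.not_true] at hX
    simp only [interp] at hv ⊢
    obtain ⟨ρf, b, rfl, hf⟩ := hv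
    refine ⟨ρf, b, rfl, fun S hSL hSU => ?_⟩
    rw [interp_updA_of_fvTyTy_eq_false hX.1.1 δ S₂ S₁] at hSL
    rw [interp_updA_of_fvTyTy_eq_false hX.1.2 δ S₂ S₁] at hSU
    refine (hf S hSL hSU).mono fun w hw => ?_
    rw [extA_updA] at hw ⊢
    exact interp_updA_mono_of_spos B hX.2 (extA δ S) hS ρf w hw
  | .sigma A B =>
    simp only [spos, Bool.and_eq_true] at hX
    simp only [interp] at hv ⊢
    obtain ⟨v₁, v₂, rfl, h₁, h₂⟩ := hv
    exact ⟨v₁, v₂, rfl, interp_updA_mono_of_spos A hX.1 δ hS ρ v₁ h₁,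
      interp_updA_mono_of_spos B hX.2 δ hS (v₁ :: ρ) v₂ h₂⟩
  | .sum A B =>
    simp only [spos, Bool.and_eq_true] at hX
    simp only [interp] at hv ⊢
    rcases hv with ⟨w, rfl, hw⟩ | ⟨w, rfl, hw⟩
    · exact .inl ⟨w, rfl, interp_updA_mono_of_spos A hX.1 δ hS ρ w hw⟩
    · exact .inr ⟨w, rfl, interp_updA_mono_of_spos B hX.2 δ hS ρ w hw⟩
  | .refine A p =>
    simp only [interp] at hv ⊢
    exact ⟨interp_updA_mono_of_spos A hX δ hS ρ v hv.1, hv.2⟩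
  | .and A B =>
    simp only [spos, Bool.and_eq_true] at hX
    simp only [interp] at hv ⊢
    exact ⟨interp_updA_mono_of_spos A hX.1 δ hS ρ v hv.1,
      interp_updA_mono_of_spos B hX.2 δ hS ρ v hv.2⟩
  | .or A B =>
    have hfree : fvTyTy X (.or A B) = false := by simpa [spos, fvTyTy] using hX
    rwa [← interp_updA_of_fvTyTy_eq_false hfree δ S₁ S₂]
  | .mu A =>
    have hfree : fvTyTy X (.mu A) = false := by
      simp only [spos, Bool.and_eq_true, Bool.not_eq_eq_eq_not, Bool.not_true] at hX
      simpa only [fvTyTy] using hX.2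
    rwa [← interp_updA_of_fvTyTy_eq_false hfree δ S₁ S₂]
termination_by sizeOf A

/-- Monotonicity: if spos(X, A) and S₁ ⊆ S₂ then
V⟦A⟧_{δ[X↦S₁]}^ρ ⊆ V⟦A⟧_{δ[X↦S₂]}^ρ. -/
theorem spos_monotonicity (X : ℕ) (A : Ty) (hA : spos X A = true)
    (δ : ℕ → Value → Prop) (ρ : List Value) (S1 S2 : Value → Prop)
    (hS : ∀ v, S1 v → S2 v) :
    ∀ v, interp A (updA δ X S1) ρ v → interp A (updA δ X S2) ρ v :=
  interp_updA_mono_of_spos A hA δ hS ρ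

end FCRT
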